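/- Proposition (the paper's Proposition 4.9: stable volume equals stable sub-volume for the (n−1)st persistent homology). Let r be an order with levels on X, let (τ₀, ω₀) be a persistence pair of r, and let ε > 0. Then the unique ‖·‖₀-minimal sub-feasible chain coincides with the unique ‖·‖₀-minimal feasible chain; i.e., the stable sub-volume of (τ₀, ω₀) with noise bandwidth ε equals the stable volume SV_ε(r, τ₀, ω₀). -/

import Mathlib

open scoped Classical

namespace StableVol

/-- A finite abstract simplicial complex of dimension `n`: a finite family of nonempty
finite subsets of the vertex set, closed under nonempty subsets, in which every element
is contained in an element of cardinality `n+1`. -/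
structure NComplex (V : Type*) [DecidableEq V] (n : ℕ) where
  X : Finset (Finset V)
  nonempty_mem : ∀ σ ∈ X, σ.Nonempty
  down_closed : ∀ σ ∈ X, ∀ σ' : Finset V, σ' ⊆ σ → σ'.Nonempty → σ' ∈ X
  contained_top : ∀ σ ∈ X, ∃ ω ∈ X, σ ⊆ ω ∧ ω.card = n + 1

variable {V : Type*} [DecidableEq V] {n : ℕ}

/-- An `n`-cell is either an `n`-simplex (`some ω`) or the formal cell `ω∞` (`none`). -/
abbrev Cell (V : Type*) := Option (Finset V)

/-- `τ` is a face of the cell `c`.  For `c = some ω` this means that `ω` is an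
`n`-simplex of `X` containing `τ`; the faces of `ω∞ = none` are the `(n-1)`-simplices
having exactly one `n`-simplex coface. -/
def faceCell (C : NComplex V n) (τ : Finset V) : Cell V → Prop
  | some ω => ω ∈ C.X ∧ ω.card = n + 1 ∧ τ ⊆ ω
  | none => {ω | ω ∈ C.X ∧ ω.card = n + 1 ∧ τ ⊆ ω}.ncard = 1

def IsCell (C : NComplex V n) : Cell V → Prop
  | some ω => ω ∈ C.X ∧ ω.card = n + 1
  | none => True

/-- Adjacency in the dual graph, restricted to the edge set `E ⊆ X^(n-1)`. -/
def adj (C : NComplex V n) (E : Set (Finset V)) (c c' : Cell V) : Prop :=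
  ∃ τ ∈ E, faceCell C τ c ∧ faceCell C τ c' ∧ c ≠ c'

/-- `KV C E c₀`: the set of `n`-cells in the connected component of `c₀` in the
subgraph of the dual graph with edge set `E`. -/
def KV (C : NComplex V n) (E : Set (Finset V)) (c₀ : Cell V) : Set (Cell V) :=
  {c | Relation.ReflTransGen (adj C E) c₀ c}

/-- Every `(n-1)`-simplex of `X` is a face of exactly two `n`-cells. -/
def TwoCofaces (C : NComplex V n) : Prop :=
  ∀ τ ∈ C.X, τ.card = n →
    ∃ c₁ c₂ : Cell V, c₁ ≠ c₂ ∧ ∀ c : Cell V, faceCell C τ c ↔ (c = c₁ ∨ c = c₂)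

/-- The dual graph (with full edge set `X^(n-1)`) is connected. -/
def DualConn (C : NComplex V n) : Prop :=
  ∀ c c' : Cell V, IsCell C c → IsCell C c' →
    c' ∈ KV C {τ | τ ∈ C.X ∧ τ.card = n} c

/-- A level function: monotone with respect to strict inclusion of simplices. -/
def IsLevelFun (C : NComplex V n) (lev : Finset V → ℝ) : Prop :=
  ∀ σ ∈ C.X, ∀ σ' ∈ C.X, σ ⊂ σ' → lev σ ≤ lev σ'

/-- `(lev, slt)` is an order with levels on `X`: `lev` is a level function and `slt`
is (the strict form of) a linear order on `X` refining both `lev` and strict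
inclusion. -/
def IsOWL (C : NComplex V n) (lev : Finset V → ℝ)
    (slt : Finset V → Finset V → Prop) : Prop :=
  IsLevelFun C lev ∧
  (∀ σ ∈ C.X, ¬ slt σ σ) ∧
  (∀ σ ∈ C.X, ∀ σ' ∈ C.X, ∀ σ'' ∈ C.X, slt σ σ' → slt σ' σ'' → slt σ σ'') ∧
  (∀ σ ∈ C.X, ∀ σ' ∈ C.X, σ ≠ σ' → slt σ σ' ∨ slt σ' σ) ∧
  (∀ σ ∈ C.X, ∀ σ' ∈ C.X, slt σ σ' → lev σ ≤ lev σ') ∧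
  (∀ σ ∈ C.X, ∀ σ' ∈ C.X, σ ⊂ σ' → slt σ σ')

/-- Extension of a strict order on simplices to `n`-cells, `ω∞ = none` being the
unique maximum. -/
def cslt (slt : Finset V → Finset V → Prop) : Cell V → Cell V → Prop
  | some σ, some σ' => slt σ σ'
  | some _, none => True
  | none, _ => False

/-- `m` is the maximum cell of the set `S` with respect to the order `slt`. -/
def IsMaxCell (slt : Finset V → Finset V → Prop) (S : Set (Cell V)) (m : Cell V) :
    Prop :=
  m ∈ S ∧ ∀ c ∈ S, c ≠ m → cslt slt c m

/-- Edge set of `G(≻ σ₀)`: the `(n-1)`-simplices strictly above `σ₀`. -/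
def Egt (C : NComplex V n) (slt : Finset V → Finset V → Prop) (σ₀ : Finset V) :
    Set (Finset V) :=
  {τ | τ ∈ C.X ∧ τ.card = n ∧ slt σ₀ τ}

/-- Edge set of `G(⪰ σ₀)`. -/
def Ege (C : NComplex V n) (slt : Finset V → Finset V → Prop) (σ₀ : Finset V) :
    Set (Finset V) :=
  {τ | τ ∈ C.X ∧ τ.card = n ∧ (τ = σ₀ ∨ slt σ₀ τ)}

/-- Edge set of `G(lev ≥ s)`. -/
def Elev (C : NComplex V n) (lev : Finset V → ℝ) (s : ℝ) : Set (Finset V) :=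
  {τ | τ ∈ C.X ∧ τ.card = n ∧ s ≤ lev τ}

/-- `(τ₀, ω₀)` is a persistence pair of the order `slt`: the two `n`-cells having
`τ₀` as a face lie in distinct connected components of `G(≻ τ₀)`, and `ω₀` is the
smaller of the two maximum cells of these two components. -/
def IsPersPair (C : NComplex V n) (slt : Finset V → Finset V → Prop)
    (τ₀ ω₀ : Finset V) : Prop :=
  τ₀ ∈ C.X ∧ τ₀.card = n ∧ ω₀ ∈ C.X ∧ ω₀.card = n + 1 ∧
  ∃ c₁ c₂ : Cell V, c₁ ≠ c₂ ∧ faceCell C τ₀ c₁ ∧ faceCell C τ₀ c₂ ∧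
    c₂ ∉ KV C (Egt C slt τ₀) c₁ ∧
    ∃ m₂ : Cell V,
      IsMaxCell slt (KV C (Egt C slt τ₀) c₁) (some ω₀) ∧
      IsMaxCell slt (KV C (Egt C slt τ₀) c₂) m₂ ∧
      cslt slt (some ω₀) m₂

/-- The optimal volume `OV(q, ω₀) = K_V(G(≻_q τ_{q,ω₀}), ω₀)`. -/
def OV (C : NComplex V n) (slt : Finset V → Finset V → Prop) (ω₀ : Finset V) :
    Set (Cell V) :=
  {c | ∃ τ, IsPersPair C slt τ ω₀ ∧ c ∈ KV C (Egt C slt τ) (some ω₀)}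

/-- The stable volume `SV_ε(r, τ₀, ω₀) = K_V(G(r̂ ≥ r̂(τ₀) + ε), ω₀)`. -/
def SV (C : NComplex V n) (lev : Finset V → ℝ) (τ₀ ω₀ : Finset V) (ε : ℝ) :
    Set (Cell V) :=
  KV C (Elev C lev (lev τ₀ + ε)) (some ω₀)

/-- `(qlev, qslt) ∈ R_ε`: an order with levels uniformly `ε/2`-close to `rlev`
satisfying the `(r, ω₀)`-order condition. -/
def InR (C : NComplex V n) (rlev : Finset V → ℝ)
    (rslt : Finset V → Finset V → Prop) (ω₀ : Finset V) (ε : ℝ)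
    (qlev : Finset V → ℝ) (qslt : Finset V → Finset V → Prop) : Prop :=
  IsOWL C qlev qslt ∧ (∀ σ ∈ C.X, |qlev σ - rlev σ| < ε / 2) ∧
  (∀ σ ∈ C.X, rslt σ ω₀ → qslt σ ω₀)

/-- `F_{ε,n}`: the `n`-simplices with level at least `lev τ₀ + ε` that precede `ω₀`. -/
def Fcells (C : NComplex V n) (lev : Finset V → ℝ)
    (slt : Finset V → Finset V → Prop) (τ₀ ω₀ : Finset V) (ε : ℝ) :
    Set (Finset V) :=
  {σ | σ ∈ C.X ∧ σ.card = n + 1 ∧ lev τ₀ + ε ≤ lev σ ∧ slt σ ω₀}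

/-- `F_{ε,n-1}`: the `(n-1)`-simplices with level at least `lev τ₀ + ε` that
precede `ω₀`. -/
def Fedges (C : NComplex V n) (lev : Finset V → ℝ)
    (slt : Finset V → Finset V → Prop) (τ₀ ω₀ : Finset V) (ε : ℝ) :
    Set (Finset V) :=
  {σ | σ ∈ C.X ∧ σ.card = n ∧ lev τ₀ + ε ≤ lev σ ∧ slt σ ω₀}

/-- `τ*(∂z)`: the `ℤ/2ℤ`-sum of the coefficients of `z` over the `n`-simplex
cofaces of `τ`. -/
def bsum (C : NComplex V n) (τ : Finset V) (z : Finset V → ZMod 2) : ZMod 2 :=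
  ∑ ω ∈ C.X.filter (fun ω => ω.card = n + 1 ∧ τ ⊆ ω), z ω

/-- A feasible chain `z = ω₀ + Σ_{ω ∈ F_{ε,n}} α_ω ω` with `τ*(∂z) = 0` for all
`τ ∈ F_{ε,n-1}`. -/
def IsFeasible (C : NComplex V n) (lev : Finset V → ℝ)
    (slt : Finset V → Finset V → Prop) (τ₀ ω₀ : Finset V) (ε : ℝ)
    (z : Finset V → ZMod 2) : Prop :=
  z ω₀ = 1 ∧
  (∀ ω : Finset V, ω ≠ ω₀ → ω ∉ Fcells C lev slt τ₀ ω₀ ε → z ω = 0) ∧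
  (∀ τ ∈ Fedges C lev slt τ₀ ω₀ ε, bsum C τ z = 0)

/-- `‖z‖₀`: the number of simplices of `X` with nonzero coefficient in `z`. -/
def norm0 (C : NComplex V n) (z : Finset V → ZMod 2) : ℕ :=
  (C.X.filter fun ω => z ω ≠ 0).card

/-- The level function of the perturbed order `q(r, η, A)`. -/
noncomputable def pertLev (C : NComplex V n) (rlev : Finset V → ℝ) (η : ℝ)
    (A : Set (Finset V)) : Finset V → ℝ :=
  fun σ => if (σ ∈ C.X ∧ σ.card = n + 1) ∨ σ ∈ A then rlev σ + η else rlev σ - η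

/-- The strict order of the perturbed order `q(r, η, A)`. -/
def pertSlt (C : NComplex V n) (rlev : Finset V → ℝ)
    (rslt : Finset V → Finset V → Prop) (η : ℝ) (A : Set (Finset V)) :
    Finset V → Finset V → Prop :=
  fun σ σ' => pertLev C rlev η A σ < pertLev C rlev η A σ' ∨
    (pertLev C rlev η A σ = pertLev C rlev η A σ' ∧ rslt σ σ')

/-- The `(n-1)`-simplices that are edges of the connected component of `c₀` in the
subgraph with edge set `E`. -/
def compEdges (C : NComplex V n) (E : Set (Finset V)) (c₀ : Cell V) :
    Set (Finset V) :=
  {τ | τ ∈ E ∧ ∃ c, faceCell C τ c ∧ c ∈ KV C E c₀}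

/-- `IsPath C E c c' vs es`: `vs` is the vertex list and `es` the edge list of a walk
from `c` to `c'` in the subgraph of the dual graph with edge set `E`. -/
inductive IsPath (C : NComplex V n) (E : Set (Finset V)) :
    Cell V → Cell V → List (Cell V) → List (Finset V) → Prop
  | nil (c : Cell V) : IsPath C E c c [c] []
  | cons {c c' c'' : Cell V} {vs : List (Cell V)} {es : List (Finset V)}
      {τ : Finset V} : τ ∈ E → faceCell C τ c → faceCell C τ c' → c ≠ c' →
      IsPath C E c' c'' vs es → IsPath C E c c'' (c :: vs) (τ :: es)


/-- A sub-feasible chain: a feasible chain whose coefficients vanish outside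
`F_{ε,n} ∩ OV(r, ω₀)`. -/
def IsSubFeasible (C : NComplex V n) (lev : Finset V → ℝ)
    (slt : Finset V → Finset V → Prop) (τ₀ ω₀ : Finset V) (ε : ℝ)
    (z : Finset V → ZMod 2) : Prop :=
  IsFeasible C lev slt τ₀ ω₀ ε z ∧
  ∀ ω : Finset V, ω ≠ ω₀ → (some ω : Cell V) ∉ OV C slt ω₀ → z ω = 0

/-!
Let `S = SV_ε(r, τ₀, ω₀)`, the component of `ω₀` in `G(r̂ ≥ r̂(τ₀) + ε)`. Every edge of this
graph lies strictly above `τ₀`, so `S` sits inside the component of `ω₀` in `G(≻ τ₀)`, whose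
maximum is `ω₀`. Hence `S ⊆ OV(r, ω₀)`, `ω∞ ∉ S`, and all cells of `S` other than `ω₀` lie in
`F_{ε,n}`; the edges of `S` then lie in `F_{ε,n-1}`. Since every `(n-1)`-simplex has exactly two
cofaces, the condition `τ*(∂z) = 0` says that `z` takes equal values on the two cofaces of `τ`.
Propagating from `ω₀` along the edges of `S`, every feasible chain is `1` on all of `S`, while the
indicator chain of `S` is itself feasible (a component is closed under its edges) and even
sub-feasible. So the indicator chain of `S` is the unique `‖·‖₀`-minimal chain of both problems.
-/

lemma zmod_two_eq_of_ne_zero_iff {a b : ZMod 2} (h : a ≠ 0 ↔ b ≠ 0) : a = b := by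
  revert a b; decide

section DualGraph

variable {C : NComplex V n} {E E' : Set (Finset V)} {c₀ c c' : Cell V}

lemma adj_symm (h : adj C E c c') : adj C E c' c := by
  obtain ⟨τ, hτ, hc, hc', hne⟩ := h
  exact ⟨τ, hτ, hc', hc, hne.symm⟩

lemma KV_mono (h : E ⊆ E') : KV C E c₀ ⊆ KV C E' c₀ :=
  fun d hd => Relation.ReflTransGen.mono (fun _ _ ⟨τ, hτ, hf⟩ => ⟨τ, h hτ, hf⟩) c₀ d hd

lemma KV_subset_of_mem (h : c ∈ KV C E c₀) : KV C E c ⊆ KV C E c₀ :=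
  fun _ => h.trans

lemma mem_KV_iff_of_adj (h : adj C E c c') : c ∈ KV C E c₀ ↔ c' ∈ KV C E c₀ :=
  ⟨fun hc => hc.tail h, fun hc' => hc'.tail (adj_symm h)⟩

lemma exists_edge_of_mem_KV (hc : c ∈ KV C E c₀) (hne : c ≠ c₀) :
    ∃ τ ∈ E, faceCell C τ c := by
  rcases Relation.ReflTransGen.cases_tail hc with rfl | ⟨_, -, τ, hτ, -, hf, -⟩
  · exact absurd rfl hne
  · exact ⟨τ, hτ, hf⟩

lemma ssubset_of_faceCell_some {τ ω : Finset V} (hτ : τ.card = n) (h : faceCell C τ (some ω)) :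
    τ ⊂ ω :=
  Finset.ssubset_iff_subset_ne.2 ⟨h.2.2, by rintro rfl; have := h.2.1; omega⟩

lemma bsum_eq_add_of_faceCell_iff {τ : Finset V} {c₁ c₂ : Cell V} (hne : c₁ ≠ c₂)
    (hfaces : ∀ c, faceCell C τ c ↔ c = c₁ ∨ c = c₂) (z : Finset V → ZMod 2) :
    bsum C τ z = Option.elim' 0 z c₁ + Option.elim' 0 z c₂ := by
  have hcofaces : C.X.filter (fun ω => ω.card = n + 1 ∧ τ ⊆ ω) = Finset.eraseNone {c₁, c₂} := by
    ext ω
    simpa [faceCell, and_assoc] using hfaces (some ω)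
  rw [bsum, hcofaces, Finset.sum_eraseNone, Finset.sum_pair hne]

lemma bsum_eq_zero_iff (htwo : TwoCofaces C) {τ : Finset V} (hτX : τ ∈ C.X) (hτ : τ.card = n)
    (hc : faceCell C τ c) (hc' : faceCell C τ c') (hne : c ≠ c') (z : Finset V → ZMod 2) :
    bsum C τ z = 0 ↔ Option.elim' 0 z c = Option.elim' 0 z c' := by
  obtain ⟨c₁, c₂, h12, hfaces⟩ := htwo τ hτX hτ
  rw [bsum_eq_add_of_faceCell_iff h12 hfaces, CharTwo.add_eq_zero]
  rcases (hfaces c).1 hc with rfl | rfl <;> rcases (hfaces c').1 hc' with rfl | rfl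
  all_goals first | exact absurd rfl hne | exact Iff.rfl | exact eq_comm

end DualGraph

noncomputable def indicatorChain (S : Set (Cell V)) : Finset V → ZMod 2 :=
  fun ω => if some ω ∈ S then 1 else 0

omit [DecidableEq V] in
lemma indicatorChain_ne_zero_iff {S : Set (Cell V)} {ω : Finset V} : indicatorChain S ω ≠ 0 ↔ some ω ∈ S := by
  by_cases h : some ω ∈ S <;> simp [indicatorChain, h]

omit [DecidableEq V] in
lemma elim_indicatorChain {S : Set (Cell V)} (hS : none ∉ S) (c : Cell V) :
    Option.elim' 0 (indicatorChain S) c = if c ∈ S then 1 else 0 := by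
  cases c with
  | none => simp [hS]
  | some ω => rfl

lemma eq_of_support_subset_of_norm0_le {C : NComplex V n} {z w : Finset V → ZMod 2}
    (hz : ∀ ω ∉ C.X, z ω = 0) (hw : ∀ ω ∉ C.X, w ω = 0) (hsupp : ∀ ω, z ω ≠ 0 → w ω ≠ 0)
    (hle : norm0 C w ≤ norm0 C z) : w = z := by
  have hsupport : C.X.filter (fun ω => z ω ≠ 0) = C.X.filter (fun ω => w ω ≠ 0) :=
    Finset.eq_of_subset_of_card_le (Finset.monotone_filter_right _ fun ω _ => hsupp ω) hle
  funext ω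
  by_cases hω : ω ∈ C.X
  · exact zmod_two_eq_of_ne_zero_iff (by simpa [hω] using (Finset.ext_iff.1 hsupport ω).symm)
  · rw [hz ω hω, hw ω hω]

section StableVolume

variable {C : NComplex V n} {lev : Finset V → ℝ} {slt : Finset V → Finset V → Prop}
  {τ₀ ω₀ : Finset V} {ε : ℝ} {c : Cell V}

lemma Elev_subset_Egt (hr : IsOWL C lev slt) (hτ₀ : τ₀ ∈ C.X) (hε : 0 < ε) :
    Elev C lev (lev τ₀ + ε) ⊆ Egt C slt τ₀ := by
  rintro τ ⟨hτX, hτ, hlev⟩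
  obtain ⟨-, -, -, htot, hmono, -⟩ := hr
  refine ⟨hτX, hτ, ?_⟩
  rcases htot τ₀ hτ₀ τ hτX (by rintro rfl; linarith) with h | h
  · exact h
  · linarith [hmono τ hτX τ₀ hτ₀ h]

lemma mem_Fedges_of_faceCell (hr : IsOWL C lev slt) (hω₀ : ω₀ ∈ C.X) {τ ω : Finset V}
    (hτE : τ ∈ Elev C lev (lev τ₀ + ε)) (hf : faceCell C τ (some ω))
    (hω : ω = ω₀ ∨ ω ∈ Fcells C lev slt τ₀ ω₀ ε) : τ ∈ Fedges C lev slt τ₀ ω₀ ε := by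
  obtain ⟨hτX, hτ, hlev⟩ := hτE
  have hτω : slt τ ω := hr.2.2.2.2.2 τ hτX ω hf.1 (ssubset_of_faceCell_some hτ hf)
  refine ⟨hτX, hτ, hlev, ?_⟩
  rcases hω with rfl | hω
  · exact hτω
  · exact hr.2.2.1 τ hτX ω hf.1 ω₀ hω₀ hτω hω.2.2.2

variable (hr : IsOWL C lev slt) (hpair : IsPersPair C slt τ₀ ω₀) (hε : 0 < ε)
include hr hpair hε

lemma SV_subset_OV : SV C lev τ₀ ω₀ ε ⊆ OV C slt ω₀ :=
  fun _ hc => ⟨τ₀, hpair, KV_mono (Elev_subset_Egt hr hpair.1 hε) hc⟩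

lemma cslt_of_mem_SV (hc : c ∈ SV C lev τ₀ ω₀ ε) (hne : c ≠ some ω₀) :
    cslt slt c (some ω₀) := by
  obtain ⟨hτ₀, -, -, -, c₁, -, -, -, -, -, -, hmax, -⟩ := hpair
  exact hmax.2 c (KV_subset_of_mem hmax.1 (KV_mono (Elev_subset_Egt hr hτ₀ hε) hc)) hne

lemma none_notMem_SV : (none : Cell V) ∉ SV C lev τ₀ ω₀ ε :=
  fun h => cslt_of_mem_SV hr hpair hε h nofun

lemma mem_Fcells_of_mem_SV {ω : Finset V} (hω : some ω ∈ SV C lev τ₀ ω₀ ε) (hne : ω ≠ ω₀) :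
    ω ∈ Fcells C lev slt τ₀ ω₀ ε := by
  have hne' : some ω ≠ some ω₀ := fun h => hne (Option.some_injective _ h)
  obtain ⟨τ, ⟨hτX, hτ, hlev⟩, hf⟩ := exists_edge_of_mem_KV hω hne'
  exact ⟨hf.1, hf.2.1, hlev.trans (hr.1 τ hτX ω hf.1 (ssubset_of_faceCell_some hτ hf)),
    cslt_of_mem_SV hr hpair hε hω hne'⟩

lemma exists_eq_some_of_mem_SV (hc : c ∈ SV C lev τ₀ ω₀ ε) :
    ∃ ω, c = some ω ∧ (ω = ω₀ ∨ ω ∈ Fcells C lev slt τ₀ ω₀ ε) := by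
  cases c with
  | none => exact absurd hc (none_notMem_SV hr hpair hε)
  | some ω => exact ⟨ω, rfl, or_iff_not_imp_left.2 (mem_Fcells_of_mem_SV hr hpair hε hc)⟩

lemma IsFeasible.elim_eq_one_of_mem_SV (htwo : TwoCofaces C) {w : Finset V → ZMod 2}
    (hw : IsFeasible C lev slt τ₀ ω₀ ε w) (hc : c ∈ SV C lev τ₀ ω₀ ε) :
    Option.elim' 0 w c = 1 := by
  induction hc with
  | refl => exact hw.1
  | tail hb hbc ih =>
    obtain ⟨τ, hτE, hfb, hfc, hne⟩ := hbc
    obtain ⟨ω, rfl, hω⟩ := exists_eq_some_of_mem_SV hr hpair hε hb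
    have hτF := mem_Fedges_of_faceCell hr hpair.2.2.1 hτE hfb hω
    rw [← (bsum_eq_zero_iff htwo hτF.1 hτF.2.1 hfb hfc hne w).1 (hw.2.2 τ hτF), ih]

lemma indicatorChain_SV_isFeasible (htwo : TwoCofaces C) :
    IsFeasible C lev slt τ₀ ω₀ ε (indicatorChain (SV C lev τ₀ ω₀ ε)) := by
  refine ⟨if_pos Relation.ReflTransGen.refl,
    fun ω hne hF => if_neg fun hω => hF (mem_Fcells_of_mem_SV hr hpair hε hω hne), ?_⟩
  rintro τ ⟨hτX, hτ, hlev, -⟩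
  obtain ⟨c₁, c₂, hne, hfaces⟩ := htwo τ hτX hτ
  have hadj : adj C (Elev C lev (lev τ₀ + ε)) c₁ c₂ :=
    ⟨τ, ⟨hτX, hτ, hlev⟩, (hfaces c₁).2 (Or.inl rfl), (hfaces c₂).2 (Or.inr rfl), hne⟩
  rw [bsum_eq_add_of_faceCell_iff hne hfaces, CharTwo.add_eq_zero,
    elim_indicatorChain (none_notMem_SV hr hpair hε), elim_indicatorChain (none_notMem_SV hr hpair hε)]
  exact if_congr (mem_KV_iff_of_adj hadj) rfl rfl

lemma indicatorChain_SV_isSubFeasible (htwo : TwoCofaces C) :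
    IsSubFeasible C lev slt τ₀ ω₀ ε (indicatorChain (SV C lev τ₀ ω₀ ε)) :=
  ⟨indicatorChain_SV_isFeasible hr hpair hε htwo,
    fun _ _ hω => if_neg fun h => hω (SV_subset_OV hr hpair hε h)⟩

lemma IsFeasible.eq_indicatorChain_SV_of_norm0_le (htwo : TwoCofaces C) {w : Finset V → ZMod 2}
    (hw : IsFeasible C lev slt τ₀ ω₀ ε w)
    (hle : norm0 C w ≤ norm0 C (indicatorChain (SV C lev τ₀ ω₀ ε))) :
    w = indicatorChain (SV C lev τ₀ ω₀ ε) := by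
  have hvanish : ∀ {z}, IsFeasible C lev slt τ₀ ω₀ ε z → ∀ ω ∉ C.X, z ω = 0 :=
    fun hz ω hω => hz.2.1 ω (by rintro rfl; exact hω hpair.2.2.1) fun h => hω h.1
  refine eq_of_support_subset_of_norm0_le (hvanish (indicatorChain_SV_isFeasible hr hpair hε htwo))
    (hvanish hw) (fun ω hω => ?_) hle
  rw [show w ω = 1 from hw.elim_eq_one_of_mem_SV hr hpair hε htwo (indicatorChain_ne_zero_iff.1 hω)]
  exact one_ne_zero

end StableVolume

theorem stable_subvolume_eq_stable_volume_general
    (C : NComplex V n) (htwo : TwoCofaces C)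
    (rlev : Finset V → ℝ) (rslt : Finset V → Finset V → Prop)
    (hr : IsOWL C rlev rslt)
    (τ₀ ω₀ : Finset V) (hpair : IsPersPair C rslt τ₀ ω₀)
    (ε : ℝ) (hε : 0 < ε) :
    ∀ z : Finset V → ZMod 2, IsSubFeasible C rlev rslt τ₀ ω₀ ε z →
      (∀ w, IsSubFeasible C rlev rslt τ₀ ω₀ ε w → norm0 C z ≤ norm0 C w) →
      ∀ z' : Finset V → ZMod 2, IsFeasible C rlev rslt τ₀ ω₀ ε z' →
        (∀ w, IsFeasible C rlev rslt τ₀ ω₀ ε w → norm0 C z' ≤ norm0 C w) →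
        z = z' ∧
        (∀ ω : Finset V, z ω ≠ 0 ↔ (some ω : Cell V) ∈ SV C rlev τ₀ ω₀ ε) := by
  intro z hz hzmin z' hz' hz'min
  obtain rfl := hz.1.eq_indicatorChain_SV_of_norm0_le hr hpair hε htwo
    (hzmin _ (indicatorChain_SV_isSubFeasible hr hpair hε htwo))
  obtain rfl := hz'.eq_indicatorChain_SV_of_norm0_le hr hpair hε htwo
    (hz'min _ (indicatorChain_SV_isFeasible hr hpair hε htwo))
  exact ⟨rfl, fun _ => indicatorChain_ne_zero_iff⟩

/-- Proposition 4.9: the `‖·‖₀`-minimal sub-feasible chain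
coincides with the `‖·‖₀`-minimal feasible chain; i.e. the stable sub-volume equals
the stable volume `SV_ε(r, τ₀, ω₀)`. -/
theorem stable_subvolume_eq_stable_volume
    (hn : 2 ≤ n) (C : NComplex V n) (htwo : TwoCofaces C) (hconn : DualConn C)
    (rlev : Finset V → ℝ) (rslt : Finset V → Finset V → Prop)
    (hr : IsOWL C rlev rslt)
    (τ₀ ω₀ : Finset V) (hpair : IsPersPair C rslt τ₀ ω₀)
    (ε : ℝ) (hε : 0 < ε) :
    ∀ z : Finset V → ZMod 2, IsSubFeasible C rlev rslt τ₀ ω₀ ε z →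
      (∀ w, IsSubFeasible C rlev rslt τ₀ ω₀ ε w → norm0 C z ≤ norm0 C w) →
      ∀ z' : Finset V → ZMod 2, IsFeasible C rlev rslt τ₀ ω₀ ε z' →
        (∀ w, IsFeasible C rlev rslt τ₀ ω₀ ε w → norm0 C z' ≤ norm0 C w) →
        z = z' ∧
        (∀ ω : Finset V, z ω ≠ 0 ↔ (some ω : Cell V) ∈ SV C rlev τ₀ ω₀ ε) :=
  stable_subvolume_eq_stable_volume_general C htwo rlev rslt hr τ₀ ω₀ hpair ε hε

end StableVol
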